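/- arXiv:math/0505467 — 3 statements merged into one kernel-verified Lean document; each statement's English description precedes it below -/
import Mathlib

section
/- Let P_0 be a Noetherian ring, P = P_0[y_1,…,y_n] the standard graded polynomial ring over P_0, P_+ = (y_1,…,y_n), and M a finitely generated graded P-module with graded components M_i (each a finitely generated P_0-module). Then dim_{P_0} M_i ≤ dim_{P_0} M/P_+M for all i, where dim denotes Krull dimension of a P_0-module. -/
/-!
If `a ∈ P₀` kills `M/P₊M`, then `aM ⊆ P₊M`. Since `M` is finitely generated it lives in degrees
`≥ b` for some `b`, and multiplying by an element of `P₊` raises the lower degree bound by one;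
as `a` commutes with `P`, this gives `aᵏM ⊆ M_{≥ b+k}`. Hence `aᵏ` kills `Mᵢ` for `k > i - b`,
so `Ann(M/P₊M) ⊆ √Ann(Mᵢ)` and the dimension inequality follows.
-/

open MvPolynomial DirectSum

namespace Paper

theorem ringKrullDim_quotient_le_of_le_radical {R : Type*} [CommRing R] {I J : Ideal R}
    (h : J ≤ I.radical) : ringKrullDim (R ⧸ I) ≤ ringKrullDim (R ⧸ J) := by
  have hsub : PrimeSpectrum.zeroLocus (I : Set R) ⊆ PrimeSpectrum.zeroLocus J := by
    rw [← PrimeSpectrum.zeroLocus_radical]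
    exact PrimeSpectrum.zeroLocus_anti_mono_ideal h
  rw [ringKrullDim_quotient, ringKrullDim_quotient]
  exact Order.krullDim_le_of_strictMono (Set.inclusion hsub) fun _ _ h => h

noncomputable abbrev irrelevantIdeal (σ R : Type*) [CommRing R] : Ideal (MvPolynomial σ R) :=
  Ideal.span (Set.range (X : σ → MvPolynomial σ R))

section GradedModule

variable {R σ M : Type*} [CommRing R] [AddCommGroup M] [Module R M]
  [Module (MvPolynomial σ R) M] (ℳ : ℤ → Submodule R M)

variable (σ) in
def IsGradedSMul : Prop :=
  ∀ (d : ℕ) (p : MvPolynomial σ R), p.IsHomogeneous d →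
    ∀ (i : ℤ) (x : M), x ∈ ℳ i → p • x ∈ ℳ (i + d)

variable [Decomposition ℳ]

theorem coe_decompose_smul_of_isHomogeneous (hsmul : IsGradedSMul σ ℳ) {p : MvPolynomial σ R}
    {d : ℕ} (hp : p.IsHomogeneous d) (x : M) (j : ℤ) :
    (decompose ℳ (p • x) j : M) = p • (decompose ℳ x (j - d) : M) := by
  induction x using Decomposition.inductionOn ℳ with
  | zero => simp
  | @homogeneous l y =>
    by_cases hj : j = l + d
    · rw [hj, decompose_of_mem_same ℳ (hsmul d p hp l y y.2), add_sub_cancel_right,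
        decompose_of_mem_same ℳ y.2]
    · rw [decompose_of_mem_ne ℳ (hsmul d p hp l y y.2) (Ne.symm hj),
        decompose_of_mem_ne ℳ y.2 (by omega), smul_zero]
  | add y z hy hz =>
    simp only [smul_add, decompose_add, DirectSum.add_apply, Submodule.coe_add, hy, hz]

def degreeGE (hsmul : IsGradedSMul σ ℳ) (b : ℤ) : Submodule (MvPolynomial σ R) M where
  carrier := {x | ∀ j < b, (decompose ℳ x j : M) = 0}
  zero_mem' _ _ := by simp
  add_mem' hx hy j hj := by simp [hx j hj, hy j hj]
  smul_mem' p x hx j hj := by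
    rw [← p.sum_homogeneousComponent, Finset.sum_smul, decompose_sum, DFinsupp.finsetSum_apply,
      Submodule.coe_sum]
    refine Finset.sum_eq_zero fun d _ => ?_
    rw [coe_decompose_smul_of_isHomogeneous ℳ hsmul (homogeneousComponent_isHomogeneous d p),
      hx _ (by omega), smul_zero]

variable {ℳ}

theorem eq_zero_of_mem_degreeGE (hsmul : IsGradedSMul σ ℳ) {x : M} {i b : ℤ} (hx : x ∈ ℳ i)
    (hxb : x ∈ degreeGE ℳ hsmul b) (hib : i < b) : x = 0 := by
  rw [← decompose_of_mem_same ℳ hx]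
  exact hxb i hib

theorem X_smul_mem_degreeGE (hsmul : IsGradedSMul σ ℳ) {x : M} {b : ℤ}
    (hx : x ∈ degreeGE ℳ hsmul b) (s : σ) :
    (X s : MvPolynomial σ R) • x ∈ degreeGE ℳ hsmul (b + 1) := fun j hj => by
  rw [coe_decompose_smul_of_isHomogeneous ℳ hsmul (isHomogeneous_X R s), Nat.cast_one,
    hx _ (by omega), smul_zero]

theorem irrelevantIdeal_smul_degreeGE_le (hsmul : IsGradedSMul σ ℳ) (b : ℤ) :
    irrelevantIdeal σ R • degreeGE ℳ hsmul b ≤ degreeGE ℳ hsmul (b + 1) := by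
  have hX : Set.range (X : σ → MvPolynomial σ R) ⊆
      (degreeGE ℳ hsmul (b + 1)).colon (degreeGE ℳ hsmul b) := by
    rintro _ ⟨s, rfl⟩
    exact Submodule.mem_colon.2 fun x hx => X_smul_mem_degreeGE hsmul hx s
  exact Submodule.smul_le.2 fun r hr x hx => Submodule.mem_colon.1 (Ideal.span_le.2 hX hr) x hx

theorem exists_degreeGE_eq_top (hsmul : IsGradedSMul σ ℳ) [Module.Finite (MvPolynomial σ R) M] :
    ∃ b, degreeGE ℳ hsmul b = ⊤ := by
  classical
  obtain ⟨s, hs⟩ := Module.Finite.fg_top (R := MvPolynomial σ R) (M := M)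
  obtain ⟨b, hb⟩ := (s.biUnion fun g => (decompose ℳ g).support).bddBelow
  refine ⟨b, eq_top_iff.2 (hs ▸ Submodule.span_le.2 fun g hg j hj => ?_)⟩
  have hj : j ∉ (decompose ℳ g).support := fun hmem =>
    absurd (hb (Finset.mem_biUnion.2 ⟨g, hg, hmem⟩)) (not_le.2 hj)
  rw [DFinsupp.notMem_support_iff.1 hj, ZeroMemClass.coe_zero]

variable [IsScalarTower R (MvPolynomial σ R) M]

theorem pow_smul_mem_degreeGE (hsmul : IsGradedSMul σ ℳ) {a : R}
    (ha : ∀ m : M, a • m ∈ irrelevantIdeal σ R • (⊤ : Submodule (MvPolynomial σ R) M)) {b : ℤ}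
    (hb : degreeGE ℳ hsmul b = ⊤) (k : ℕ) (m : M) : a ^ k • m ∈ degreeGE ℳ hsmul (b + k) := by
  induction k generalizing m with
  | zero => simp [hb]
  | succ k ih =>
    rw [pow_succ, mul_smul, Nat.cast_succ, ← add_assoc]
    refine Submodule.smul_induction_on (p := fun y => a ^ k • y ∈ degreeGE ℳ hsmul (b + k + 1))
      (ha m) (fun p hp y _ => ?_) fun y z hy hz => ?_
    · rw [smul_comm]
      exact irrelevantIdeal_smul_degreeGE_le hsmul _ (Submodule.smul_mem_smul hp (ih y))
    · rw [smul_add]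
      exact add_mem hy hz

theorem annihilator_quotient_le_radical_annihilator (hsmul : IsGradedSMul σ ℳ)
    [Module.Finite (MvPolynomial σ R) M] (i : ℤ) :
    Module.annihilator R
        (M ⧸ (irrelevantIdeal σ R • ⊤ : Submodule (MvPolynomial σ R) M).restrictScalars R) ≤
      (Module.annihilator R (ℳ i)).radical := by
  intro a ha
  rw [Submodule.annihilator_quotient, Submodule.mem_colon] at ha
  obtain ⟨b, hb⟩ := exists_degreeGE_eq_top hsmul
  refine ⟨(i - b).toNat + 1, Module.mem_annihilator.2 fun x => Subtype.ext ?_⟩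
  exact eq_zero_of_mem_degreeGE hsmul (Submodule.smul_of_tower_mem _ _ x.2)
    (pow_smul_mem_degreeGE hsmul (fun m => ha m trivial) hb _ x) (by omega)

end GradedModule

theorem dim_of_graded_component_le_dim_of_quotient_by_irrelevant_ideal_general
    (P₀ : Type) [CommRing P₀] (n : ℕ)
    (M : Type) [AddCommGroup M]
    [Module P₀ M] [Module (MvPolynomial (Fin n) P₀) M]
    [IsScalarTower P₀ (MvPolynomial (Fin n) P₀) M]
    [Module.Finite (MvPolynomial (Fin n) P₀) M]
    -- a grading of `M` by `P₀`-submodules, compatible with the standard grading of `P`: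
    (ℳ : ℤ → Submodule P₀ M)
    (hdecomp : DirectSum.IsInternal ℳ)
    (hsmul : ∀ (d : ℕ) (p : MvPolynomial (Fin n) P₀), p.IsHomogeneous d →
      ∀ (i : ℤ) (x : M), x ∈ ℳ i → p • x ∈ ℳ (i + d))
    (i : ℤ) :
    ringKrullDim (P₀ ⧸ Module.annihilator P₀ ↥(ℳ i)) ≤
      ringKrullDim (P₀ ⧸ Module.annihilator P₀
        (M ⧸ Submodule.restrictScalars P₀
          ((Ideal.span (Set.range (MvPolynomial.X : Fin n → MvPolynomial (Fin n) P₀))) •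
            (⊤ : Submodule (MvPolynomial (Fin n) P₀) M)))) :=
  letI := hdecomp.chooseDecomposition
  ringKrullDim_quotient_le_of_le_radical (annihilator_quotient_le_radical_annihilator hsmul i)

/-- **Lemma (paper, Lemma 2.1).** -/
theorem dim_of_graded_component_le_dim_of_quotient_by_irrelevant_ideal
    (P₀ : Type) [CommRing P₀] [IsNoetherianRing P₀] (n : ℕ)
    (M : Type) [AddCommGroup M]
    [Module P₀ M] [Module (MvPolynomial (Fin n) P₀) M]
    [IsScalarTower P₀ (MvPolynomial (Fin n) P₀) M]
    [Module.Finite (MvPolynomial (Fin n) P₀) M]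
    -- a grading of `M` by `P₀`-submodules, compatible with the standard grading of `P`:
    (ℳ : ℤ → Submodule P₀ M)
    (hdecomp : DirectSum.IsInternal ℳ)
    (hsmul : ∀ (d : ℕ) (p : MvPolynomial (Fin n) P₀), p.IsHomogeneous d →
      ∀ (i : ℤ) (x : M), x ∈ ℳ i → p • x ∈ ℳ (i + d))
    (i : ℤ) :
    ringKrullDim (P₀ ⧸ Module.annihilator P₀ ↥(ℳ i)) ≤
      ringKrullDim (P₀ ⧸ Module.annihilator P₀
        (M ⧸ Submodule.restrictScalars P₀
          ((Ideal.span (Set.range (MvPolynomial.X : Fin n → MvPolynomial (Fin n) P₀))) •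
            (⊤ : Submodule (MvPolynomial (Fin n) P₀) M)))) :=
  dim_of_graded_component_le_dim_of_quotient_by_irrelevant_ideal_general P₀ n M ℳ hdecomp hsmul i

end Paper
end

section
/- Let P_0 be a Noetherian ring, P = P_0[y_1,…,y_n] the standard graded polynomial ring over P_0, and M a finitely generated graded P-module with graded components M_i. Then there exists an integer i_0 such that Ann_{P_0} M_i = Ann_{P_0} M_{i+1} for all i ≥ i_0. -/
/-!
Since `M` is finitely generated, it is generated by homogeneous elements of degree at most some
`b`. For `i ≥ b`, every element of `M_{i+1}` is then a sum of terms `q • g` with `g` a generator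
and `q` homogeneous of positive degree, hence a sum of terms `y_k • z` with `z ∈ M_i`; so
`Ann M_i ⊆ Ann M_{i+1}`. This chain of ideals of the Noetherian ring `P₀` stabilizes.
-/

open MvPolynomial

namespace Paper

theorem exists_forall_ge_eq_succ_of_forall_ge_le_succ {α : Type*} [PartialOrder α]
    [WellFoundedGT α] (f : ℤ → α) (b : ℤ) (hf : ∀ i, b ≤ i → f i ≤ f (i + 1)) :
    ∃ i₀, ∀ i, i₀ ≤ i → f i = f (i + 1) := by
  let g : ℕ →o α := ⟨fun k => f (b + k), monotone_nat_of_le_succ fun k => by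
    simpa [add_assoc] using hf (b + k) (by omega)⟩
  obtain ⟨N, hN⟩ := WellFoundedGT.monotone_chain_condition g
  refine ⟨b + N, fun i hi => ?_⟩
  obtain ⟨k, rfl⟩ : ∃ k : ℕ, i = b + k := ⟨(i - b).toNat, by omega⟩
  have hk := (hN k (by omega)).symm.trans (hN (k + 1) (by omega))
  simpa [g, add_assoc] using hk

theorem exists_span_iUnion_le_eq_top {A R M ι : Type*} [Semiring A] [Semiring R]
    [AddCommMonoid M] [Module A M] [Module R M] [Module.Finite A M]
    [LinearOrder ι] [Nonempty ι]
    (ℳ : ι → Submodule R M) [DirectSum.Decomposition ℳ] :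
    ∃ b : ι, Submodule.span A (⋃ d ≤ b, (ℳ d : Set M)) = ⊤ := by
  classical
  obtain ⟨s, hs⟩ := Module.Finite.fg_top (R := A) (M := M)
  obtain ⟨b, hb⟩ := (s.biUnion fun g => (DirectSum.decompose ℳ g).support).exists_le
  refine ⟨b, eq_top_iff.mpr (hs ▸ Submodule.span_le.mpr fun g hg => ?_)⟩
  rw [← DirectSum.sum_support_decompose ℳ g]
  refine Submodule.sum_mem _ fun d hd => Submodule.subset_span ?_
  exact Set.mem_biUnion (hb d (Finset.mem_biUnion.mpr ⟨g, hg, hd⟩)) (SetLike.coe_mem _)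

theorem _root_.Finsupp.exists_eq_single_add_of_degree_eq_succ {σ : Type*} {m : σ →₀ ℕ} {e : ℕ}
    (hm : m.degree = e + 1) : ∃ k m', m = Finsupp.single k 1 + m' ∧ m'.degree = e := by
  obtain ⟨k, hk⟩ : ∃ k, m k ≠ 0 := by
    by_contra! h
    rw [show m = 0 from Finsupp.ext h, map_zero] at hm
    omega
  have hle : Finsupp.single k 1 ≤ m := Finsupp.single_le_iff.mpr (Nat.one_le_iff_ne_zero.mpr hk)
  refine ⟨k, m - Finsupp.single k 1, (add_tsub_cancel_of_le hle).symm, ?_⟩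
  have := congrArg Finsupp.degree (add_tsub_cancel_of_le hle)
  rw [map_add, Finsupp.degree_single] at this
  omega

section GradedModule

variable {P₀ σ M : Type*} [CommRing P₀] [AddCommGroup M] [Module P₀ M]
  [Module (MvPolynomial σ P₀) M]

variable (σ) in
def IsCompatibleGrading (ℳ : ℤ → Submodule P₀ M) : Prop :=
  ∀ (d : ℕ) (p : MvPolynomial σ P₀), p.IsHomogeneous d →
    ∀ (i : ℤ) (x : M), x ∈ ℳ i → p • x ∈ ℳ (i + d)

variable {ℳ : ℤ → Submodule P₀ M} (hℳ : IsCompatibleGrading σ ℳ)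
include hℳ

theorem IsCompatibleGrading.smul_smul_eq_zero_of_isHomogeneous_succ
    [IsScalarTower P₀ (MvPolynomial σ P₀) M]
    {e : ℕ} {q : MvPolynomial σ P₀} (hq : q.IsHomogeneous (e + 1))
    {j : ℤ} {h : M} (hh : h ∈ ℳ j) {a : P₀} (ha : ∀ z ∈ ℳ (j + e), a • z = 0) :
    a • q • h = 0 := by
  classical
  rw [q.as_sum, Finset.sum_smul, Finset.smul_sum]
  refine Finset.sum_eq_zero fun m hm => ?_
  have hdeg : m.degree = e + 1 := by
    rw [Finsupp.degree_eq_weight_one]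
    exact hq (mem_support_iff.mp hm)
  obtain ⟨k, m', rfl, hm'⟩ := Finsupp.exists_eq_single_add_of_degree_eq_succ hdeg
  have hmem := hℳ e _ (isHomogeneous_monomial (coeff (Finsupp.single k 1 + m') q) hm') j h hh
  rw [monomial_single_add, pow_one, mul_smul, smul_comm a (X k : MvPolynomial σ P₀), ha _ hmem,
    smul_zero]

theorem IsCompatibleGrading.decompose_smul_of_mem [DirectSum.Decomposition ℳ]
    (p : MvPolynomial σ P₀) {j i : ℤ} {x : M} (hx : x ∈ ℳ j) (hji : j ≤ i) :
    (DirectSum.decompose ℳ (p • x) i : M) = homogeneousComponent (i - j).toNat p • x := by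
  classical
  have hmem (d : ℕ) : homogeneousComponent d p • x ∈ ℳ (j + d) :=
    hℳ d _ (homogeneousComponent_isHomogeneous d p) j x hx
  conv_lhs => rw [← sum_homogeneousComponent p, Finset.sum_smul, DirectSum.decompose_sum]
  rw [DFinsupp.finsetSum_apply, Submodule.coe_sum]
  refine (Finset.sum_eq_single (i - j).toNat (fun d _ hd => ?_) (fun hd => ?_)).trans ?_
  · exact DirectSum.decompose_of_mem_ne ℳ (hmem d) (by omega)
  · rw [homogeneousComponent_eq_zero _ p (by simp at hd; omega), zero_smul,
      DirectSum.decompose_zero]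
    rfl
  · have hmem' := hmem (i - j).toNat
    rw [show j + ((i - j).toNat : ℤ) = i by omega] at hmem'
    rw [DirectSum.decompose_of_mem_same ℳ hmem']

theorem IsCompatibleGrading.annihilator_le_annihilator_succ
    [IsScalarTower P₀ (MvPolynomial σ P₀) M] [DirectSum.Decomposition ℳ] {b : ℤ}
    (hb : Submodule.span (MvPolynomial σ P₀) (⋃ d ≤ b, (ℳ d : Set M)) = ⊤) {i : ℤ}
    (hbi : b ≤ i) : Module.annihilator P₀ (ℳ i) ≤ Module.annihilator P₀ (ℳ (i + 1)) := by
  intro a ha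
  change a ∈ (ℳ (i + 1)).annihilator
  replace ha : a ∈ (ℳ i).annihilator := ha
  rw [Submodule.mem_annihilator] at ha ⊢
  intro x hx
  obtain ⟨N, f, g, rfl⟩ := Submodule.mem_span_set'.mp (hb ▸ Submodule.mem_top : x ∈ _)
  rw [← DirectSum.decompose_of_mem_same ℳ hx, DirectSum.decompose_sum, DFinsupp.finsetSum_apply,
    Submodule.coe_sum, Finset.smul_sum]
  refine Finset.sum_eq_zero fun k _ => ?_
  obtain ⟨d, hdb, hg⟩ := Set.mem_iUnion₂.mp (g k).2
  obtain ⟨e, rfl⟩ : ∃ e : ℕ, i = d + e := ⟨(i - d).toNat, by omega⟩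
  rw [hℳ.decompose_smul_of_mem (f k) hg (by omega), show (d + e + 1 - d).toNat = e + 1 by omega]
  exact hℳ.smul_smul_eq_zero_of_isHomogeneous_succ (homogeneousComponent_isHomogeneous _ _) hg ha

end GradedModule

/-- **Lemma (paper, Lemma 2.2).** -/
theorem annihilators_of_graded_components_stabilize
    (P₀ : Type) [CommRing P₀] [IsNoetherianRing P₀] (n : ℕ)
    (M : Type) [AddCommGroup M]
    [Module P₀ M] [Module (MvPolynomial (Fin n) P₀) M]
    [IsScalarTower P₀ (MvPolynomial (Fin n) P₀) M]
    [Module.Finite (MvPolynomial (Fin n) P₀) M]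
    -- a grading of `M` by `P₀`-submodules, compatible with the standard grading of `P`:
    (ℳ : ℤ → Submodule P₀ M)
    (hdecomp : DirectSum.IsInternal ℳ)
    (hsmul : ∀ (d : ℕ) (p : MvPolynomial (Fin n) P₀), p.IsHomogeneous d →
      ∀ (i : ℤ) (x : M), x ∈ ℳ i → p • x ∈ ℳ (i + d)) :
    ∃ i₀ : ℤ, ∀ i : ℤ, i₀ ≤ i →
      Module.annihilator P₀ ↥(ℳ i) = Module.annihilator P₀ ↥(ℳ (i + 1)) := by
  let := hdecomp.chooseDecomposition
  obtain ⟨b, hb⟩ := exists_span_iUnion_le_eq_top (A := MvPolynomial (Fin n) P₀) ℳ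
  exact exists_forall_ge_eq_succ_of_forall_ge_le_succ _ b fun i hbi =>
    IsCompatibleGrading.annihilator_le_annihilator_succ hsmul hb hbi

end Paper
end

section
/- Let f ∈ P = K[x_1,…,x_m,y_1,…,y_n] be bihomogeneous of bidegree (a,b) and R = P/fP. For j ≤ −n let U_j ⊆ F_j = ⊕_{|c| = −n−j} P_0 z^c be the image of the map ⊕_{|c| = −n−j+b} P_0(−a) z^c → F_j induced by multiplication by f on H^n_{P_+}(P), with the basis elements z^c ordered lexicographically by z_1 > ⋯ > z_n. For a monomial u of degree −n−j in z_1,…,z_n, let I_{j,u} ⊆ P_0 be the ideal generated by the initial coefficients of those elements of U_j whose initial monomial is u. Then I_{j,u} = I_{j-1, z_1 u} for all j ≤ −n and all monomials u of degree −n−j. -/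
/-!
Formalization of a statement from "On the regularity of local cohomology of bigraded algebras"
(A. Rahimi). Here `P₀ = K[x₁,…,x_m]`, `P = P₀[y₁,…,yₙ]` is bigraded with `deg xᵢ = (1,0)`,
`deg yⱼ = (0,1)`, and `P₊ = (y₁,…,yₙ)`.  The top local cohomology `H^n_{P₊}(P)` is the free
`P₀`-module `⊕_c P₀ z^c` (`c : Fin n →₀ ℕ`, `z^c` of bidegree `(0, -n - |c|)`), on which a
bihomogeneous `f = Σ_β f_β y^β ∈ P` acts by the contraction `f ⬝ z^c = Σ_{β ≤ c} f_β z^{c-β}`.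
For a hypersurface ring `R = P/fP` this yields the exact presentation
`⊕_{|c| = -n-j+b} P₀(-a) z^c → ⊕_{|c| = -n-j} P₀ z^c → H^n_{P₊}(R)_j → 0`
(with `(a,b) = bideg f`), and `H^{n-1}_{P₊}(R)_j` is the kernel of the first map.
-/

open MvPolynomial

namespace Paper

/-- Total degree of an exponent vector. -/
def tdeg {n : ℕ} (c : Fin n →₀ ℕ) : ℕ := c.sum fun _ e => e

variable (A : Type) [CommRing A] (n : ℕ)

/-- The underlying module of the top local cohomology `H^n_{P₊}(P)` of `P = A[y₁,…,yₙ]`: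
the free `A`-module with basis `z^c`, `c : Fin n →₀ ℕ` (`z^c` lies in `y`-degree `-n - |c|`). -/
abbrev Wmod := (Fin n →₀ ℕ) →₀ A

/-- The free `A`-submodule of `Wmod` spanned by the `z^c` with `|c| = k`;
this is the graded component `H^n_{P₊}(P)_j` for `j = -n-k`. -/
noncomputable def Fk (k : ℕ) : Submodule A (Wmod A n) :=
  Finsupp.supported A A {c | tdeg c = k}

open scoped Classical in
/-- The contraction action of `f ∈ P = A[y₁,…,yₙ]` on `H^n_{P₊}(P)`:
`f ⬝ z^c = Σ_{β ≤ c} f_β z^{c-β}`, where `f = Σ_β f_β y^β` with `f_β ∈ A`. -/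
noncomputable def contract (f : MvPolynomial (Fin n) A) :
    Wmod A n →ₗ[A] Wmod A n :=
  Finsupp.lsum A fun c =>
    (LinearMap.id : A →ₗ[A] A).smulRight
      (f.support.sum fun β => if β ≤ c then Finsupp.single (c - β) (MvPolynomial.coeff β f) else 0)

variable (K : Type) [Field K] (m : ℕ)

/-- `f ∈ P = K[x₁,…,x_m][y₁,…,yₙ]` is bihomogeneous of bidegree `(a,b)`:
every monomial `x^ν y^β` occurring in `f` has `|ν| = a` and `|β| = b`. -/
def IsBihom (f : MvPolynomial (Fin n) (MvPolynomial (Fin m) K)) (a b : ℕ) : Prop :=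
  ∀ β ν, MvPolynomial.coeff ν (MvPolynomial.coeff β f) ≠ 0 → tdeg ν = a ∧ tdeg β = b

/-- The `x`-degree-`i` strand of `Wmod` (coefficients homogeneous of degree `i`). -/
def strandW (i : ℤ) : Submodule K (Wmod (MvPolynomial (Fin m) K) n) where
  carrier := {w | ∀ c ν, MvPolynomial.coeff ν (w c) ≠ 0 → (tdeg ν : ℤ) = i}
  add_mem' := by
    intro a b ha hb c ν h
    rw [Finsupp.add_apply, MvPolynomial.coeff_add] at h
    by_cases h1 : MvPolynomial.coeff ν (a c) ≠ 0
    · exact ha c ν h1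
    · push_neg at h1
      exact hb c ν (by simpa [h1] using h)
  zero_mem' := by intro c ν h; simp at h
  smul_mem' := by
    intro k w hw c ν h
    rw [Finsupp.smul_apply, MvPolynomial.coeff_smul] at h
    exact hw c ν (right_ne_zero_of_smul h)

/-- The submodule `U_j ⊆ F_j = ⊕_{|c| = t} P₀ z^c` (`j = -n-t`): the image of
`⊕_{|c| = t+b} P₀(-a) z^c` under multiplication by `f` on `H^n_{P₊}(P)`. -/
noncomputable def Uf (f : MvPolynomial (Fin n) (MvPolynomial (Fin m) K)) (t b : ℕ) :
    Submodule (MvPolynomial (Fin m) K) (Wmod (MvPolynomial (Fin m) K) n) :=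
  Submodule.map (contract (MvPolynomial (Fin m) K) n f) (Fk (MvPolynomial (Fin m) K) n (t + b))

/-- The graded component `H^n_{P₊}(P/fP)_j`, `j = -n-t`, realized as the image of
`F_j = ⊕_{|c| = t} P₀ z^c` in `Wmod/U_j`; i.e. the cokernel `F_j/U_j` of the presentation. -/
noncomputable def topH (f : MvPolynomial (Fin n) (MvPolynomial (Fin m) K)) (t b : ℕ) :
    Submodule (MvPolynomial (Fin m) K)
      ((Wmod (MvPolynomial (Fin m) K) n) ⧸ Uf n K m f t b) :=
  Submodule.map (Uf n K m f t b).mkQ (Fk (MvPolynomial (Fin m) K) n t)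

/-- The `x`-degree-`i` component of `H^n_{P₊}(P/fP)_j`, `j = -n-t`, inside `Wmod/U_j`. -/
noncomputable def topHcomp (f : MvPolynomial (Fin n) (MvPolynomial (Fin m) K)) (t b : ℕ)
    (i : ℤ) : Submodule K ((Wmod (MvPolynomial (Fin m) K) n) ⧸ Uf n K m f t b) :=
  Submodule.map ((Uf n K m f t b).mkQ.restrictScalars K)
    (strandW n K m i ⊓ (Fk (MvPolynomial (Fin m) K) n t).restrictScalars K)

/-- The grading (by `x`-degree) of `H^n_{P₊}(P/fP)_j`, `j = -n-t`. -/
noncomputable def topHgr (f : MvPolynomial (Fin n) (MvPolynomial (Fin m) K)) (t b : ℕ)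
    (i : ℤ) : Submodule K ↥(topH n K m f t b) :=
  Submodule.comap ((topH n K m f t b).subtype.restrictScalars K) (topHcomp n K m f t b i)

/-- `H^{n-1}_{P₊}(P/fP)_j`, `j = -n-t`: the kernel of multiplication by `f` from
`⊕_{|c| = t+b} P₀(-a) z^c` to `⊕_{|c| = t} P₀ z^c`. -/
noncomputable def syzM (f : MvPolynomial (Fin n) (MvPolynomial (Fin m) K)) (t b : ℕ) :
    Submodule (MvPolynomial (Fin m) K) (Wmod (MvPolynomial (Fin m) K) n) :=
  LinearMap.ker (contract (MvPolynomial (Fin m) K) n f) ⊓ Fk (MvPolynomial (Fin m) K) n (t + b)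

/-- The grading of `H^{n-1}_{P₊}(P/fP)_j`, `j = -n-t`: since it lives inside
`⊕_{|c| = t+b} P₀(-a) z^c`, its degree-`i` component consists of the elements whose
coefficients are homogeneous of degree `i - a`. -/
noncomputable def syzGr (f : MvPolynomial (Fin n) (MvPolynomial (Fin m) K)) (t b a : ℕ)
    (i : ℤ) : Submodule K ↥(syzM n K m f t b) :=
  Submodule.comap ((syzM n K m f t b).subtype.restrictScalars K) (strandW n K m (i - a))

/-- The ideal `I_{j,u} ⊆ P₀` of initial coefficients: it is generated by the coefficients
`h_u` of those nonzero `h ∈ U_j` whose initial monomial (the lexicographically largest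
`z^v`, for the order induced by `z₁ > z₂ > ⋯ > zₙ`, with `h_v ≠ 0`) is `z^u`. -/
noncomputable def iniIdeal (Uj : Submodule (MvPolynomial (Fin m) K) (Wmod (MvPolynomial (Fin m) K) n))
    (u : Fin n →₀ ℕ) : Ideal (MvPolynomial (Fin m) K) :=
  Ideal.span {p | ∃ h ∈ Uj, h u = p ∧ h u ≠ 0 ∧ ∀ v, h v ≠ 0 → toLex v ≤ toLex u}

/-!
Multiplication by `z₁` on exponents, `g ↦ g(· - e₁)`, commutes with the contraction by `f`,
so it maps `U_j` into `U_{j-1}` with the coefficient of `z^v` moved to `z₁ z^v`; conversely,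
keeping only the terms divisible by `z₁` and dividing by `z₁` maps `U_{j-1}` back into `U_j`
with the same coefficient relation. Since `z₁` is the largest variable, every monomial not
divisible by `z₁` is lexicographically below `z₁ u`, so under this correspondence the elements
with initial monomial `u` and those with initial monomial `z₁ u` have the same initial
coefficients.
-/

section Contraction

variable {A n}

theorem tdeg_eq_degree (c : Fin n →₀ ℕ) : tdeg c = c.degree := rfl

theorem tdeg_add (c d : Fin n →₀ ℕ) : tdeg (c + d) = tdeg c + tdeg d := by
  simp only [tdeg_eq_degree, map_add]

-- Classical decidability, to match the instance inside `contract`.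
open scoped Classical in
theorem ite_le_single_tsub_apply {σ M : Type*} [Zero M] (β c w : σ →₀ ℕ) (x : M) :
    (if β ≤ c then Finsupp.single (c - β) x else 0) w = if c = w + β then x else 0 := by
  by_cases hβc : β ≤ c
  · have : c - β = w ↔ c = w + β := tsub_eq_iff_eq_add_of_le hβc
    simp [hβc, Finsupp.single_apply, this]
  · have : c ≠ w + β := fun h => hβc (h ▸ le_add_self)
    simp [hβc, this]

theorem contract_apply (f : MvPolynomial (Fin n) A) (g : Wmod A n) (w : Fin n →₀ ℕ) :
    contract A n f g w = ∑ β ∈ f.support, g (w + β) * coeff β f := by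
  classical
  simp only [contract, Finsupp.lsum_apply, Finsupp.sum_apply, LinearMap.smulRight_apply,
    LinearMap.id_apply, Finsupp.smul_apply, Finsupp.finsetSum_apply, ite_le_single_tsub_apply,
    smul_eq_mul, Finset.mul_sum, mul_ite, mul_zero]
  rw [Finsupp.sum, Finset.sum_comm]
  refine Finset.sum_congr rfl fun β _ => ?_
  simp +contextual [Finset.sum_ite_eq']

theorem contract_apply_add_of_forall_apply_add {g g' : Wmod A n} {e : Fin n →₀ ℕ}
    (hg : ∀ w, g' (w + e) = g w) (f : MvPolynomial (Fin n) A) (v : Fin n →₀ ℕ) :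
    contract A n f g' (v + e) = contract A n f g v := by
  simp only [contract_apply, add_right_comm v e, hg]

theorem mapDomain_add_mem_Fk {g : Wmod A n} {k : ℕ} (hg : g ∈ Fk A n k) (e : Fin n →₀ ℕ) :
    Finsupp.mapDomain (· + e) g ∈ Fk A n (k + tdeg e) := by
  refine Finsupp.supported_comap_lmapDomain A A (· + e) _ (Finsupp.supported_mono ?_ hg)
  intro c hc
  simp_all [tdeg_add]

theorem comapDomain_add_mem_Fk {g' : Wmod A n} {k : ℕ} {e : Fin n →₀ ℕ}
    (hg' : g' ∈ Fk A n (k + tdeg e)) :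
    Finsupp.comapDomain (· + e) g' (add_left_injective e).injOn ∈ Fk A n k := by
  rw [Fk, Finsupp.mem_supported'] at hg' ⊢
  intro d hd
  exact hg' (d + e) (by simpa [tdeg_add] using hd)

end Contraction

section InitialTerms

variable {n}

theorem toLex_lt_of_apply_zero_lt (hn : 0 < n) {v w : Fin n →₀ ℕ}
    (h : v ⟨0, hn⟩ < w ⟨0, hn⟩) : toLex v < toLex w :=
  Finsupp.Lex.lt_iff.mpr ⟨⟨0, hn⟩, fun j hj => absurd hj (Nat.not_lt_zero j), h⟩

def IsInitialMonomial {M : Type*} [Zero M] (h : (Fin n →₀ ℕ) →₀ M) (u : Fin n →₀ ℕ) : Prop :=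
  h u ≠ 0 ∧ ∀ v, h v ≠ 0 → toLex v ≤ toLex u

theorem isInitialMonomial_add_single_iff {M : Type*} [Zero M] (hn : 0 < n)
    {h h' : (Fin n →₀ ℕ) →₀ M} (hshift : ∀ v, h' (v + Finsupp.single ⟨0, hn⟩ 1) = h v)
    (u : Fin n →₀ ℕ) :
    IsInitialMonomial h' (u + Finsupp.single ⟨0, hn⟩ 1) ↔ IsInitialMonomial h u := by
  set e := Finsupp.single (⟨0, hn⟩ : Fin n) 1
  have toLex_add_e_le (v w : Fin n →₀ ℕ) : toLex (v + e) ≤ toLex (w + e) ↔ toLex v ≤ toLex w := by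
    rw [toLex_add, toLex_add, add_le_add_iff_right]
  rw [IsInitialMonomial, IsInitialMonomial, hshift]
  refine and_congr_right fun _ => ⟨fun hmax v hv => ?_, fun hmax v hv => ?_⟩
  · exact (toLex_add_e_le v u).1 (hmax _ (by rwa [hshift]))
  · by_cases hv0 : v ⟨0, hn⟩ = 0
    · exact (toLex_lt_of_apply_zero_lt hn (by simp [e, hv0])).le
    · obtain ⟨w, rfl⟩ : ∃ w, v = w + e :=
        ⟨v - e, (tsub_add_cancel_of_le (by simpa [e, Nat.one_le_iff_ne_zero] using hv0)).symm⟩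
      exact (toLex_add_e_le w u).2 (hmax w (by rwa [← hshift]))

end InitialTerms

section Shift

variable {n K m}

theorem iniIdeal_eq_of_shift (hn : 0 < n)
    {U U' : Submodule (MvPolynomial (Fin m) K) (Wmod (MvPolynomial (Fin m) K) n)}
    (hUU' : ∀ h ∈ U, ∃ h' ∈ U', ∀ v, h' (v + Finsupp.single ⟨0, hn⟩ 1) = h v)
    (hU'U : ∀ h' ∈ U', ∃ h ∈ U, ∀ v, h' (v + Finsupp.single ⟨0, hn⟩ 1) = h v)
    (u : Fin n →₀ ℕ) :
    iniIdeal n K m U u = iniIdeal n K m U' (u + Finsupp.single ⟨0, hn⟩ 1) := by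
  unfold iniIdeal
  congr 1
  ext p
  constructor
  · rintro ⟨h, hU, rfl, hini⟩
    obtain ⟨h', hU', hshift⟩ := hUU' h hU
    exact ⟨h', hU', hshift u, (isInitialMonomial_add_single_iff hn hshift u).2 hini⟩
  · rintro ⟨h', hU', rfl, hini⟩
    obtain ⟨h, hU, hshift⟩ := hU'U h' hU'
    exact ⟨h, hU, (hshift u).symm, (isInitialMonomial_add_single_iff hn hshift u).1 hini⟩

theorem exists_mem_Uf_shift (f : MvPolynomial (Fin n) (MvPolynomial (Fin m) K)) {t b k : ℕ}
    {e : Fin n →₀ ℕ} (he : tdeg e = k) {h : Wmod (MvPolynomial (Fin m) K) n}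
    (hh : h ∈ Uf n K m f t b) :
    ∃ h' ∈ Uf n K m f (t + k) b, ∀ v, h' (v + e) = h v := by
  subst he
  obtain ⟨g, hg, rfl⟩ := hh
  refine ⟨_, ⟨_, ?_, rfl⟩, contract_apply_add_of_forall_apply_add
    (Finsupp.mapDomain_apply (add_left_injective e) g) f⟩
  rw [add_right_comm]
  exact mapDomain_add_mem_Fk hg e

theorem exists_mem_Uf_of_shift (f : MvPolynomial (Fin n) (MvPolynomial (Fin m) K)) {t b k : ℕ}
    {e : Fin n →₀ ℕ} (he : tdeg e = k) {h' : Wmod (MvPolynomial (Fin m) K) n}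
    (hh' : h' ∈ Uf n K m f (t + k) b) :
    ∃ h ∈ Uf n K m f t b, ∀ v, h' (v + e) = h v := by
  subst he
  obtain ⟨g', hg', rfl⟩ := hh'
  rw [add_right_comm] at hg'
  exact ⟨_, ⟨_, comapDomain_add_mem_Fk hg', rfl⟩, contract_apply_add_of_forall_apply_add
    (fun w => (Finsupp.comapDomain_apply (· + e) g' _ w).symm) f⟩

end Shift

theorem initial_coefficient_ideals_stable_general
    (K : Type) [Field K] (m n : ℕ) (hn : 0 < n)
    (f : MvPolynomial (Fin n) (MvPolynomial (Fin m) K)) (b : ℕ)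
    (t : ℕ) (u : Fin n →₀ ℕ) :
    iniIdeal n K m (Uf n K m f t b) u =
      iniIdeal n K m (Uf n K m f (t + 1) b) (u + Finsupp.single (⟨0, hn⟩ : Fin n) 1) := by
  have htdeg : tdeg (Finsupp.single (⟨0, hn⟩ : Fin n) 1) = 1 := by simp [tdeg_eq_degree]
  exact iniIdeal_eq_of_shift hn (fun _ hh => exists_mem_Uf_shift f htdeg hh)
    (fun _ hh' => exists_mem_Uf_of_shift f htdeg hh') u

/-- **Proposition (paper, Proposition 3.1).** Let `f ∈ P` be bihomogeneous of bidegree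
`(a,b)` and `U_j` the presentation module of `H^n_{P₊}(P/fP)_j`.  Then
`I_{j,u} = I_{j-1, z₁u}` for all `j ≤ -n` (i.e. `j = -n-t`, `t ∈ ℕ`) and all monomials
`z^u` with `|u| = -n-j = t`. -/
theorem initial_coefficient_ideals_stable
    (K : Type) [Field K] (m n : ℕ) (hn : 0 < n)
    (f : MvPolynomial (Fin n) (MvPolynomial (Fin m) K)) (a b : ℕ)
    (hf : IsBihom n K m f a b)
    (t : ℕ) (u : Fin n →₀ ℕ) (hu : tdeg u = t) :
    iniIdeal n K m (Uf n K m f t b) u =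
      iniIdeal n K m (Uf n K m f (t + 1) b) (u + Finsupp.single (⟨0, hn⟩ : Fin n) 1) :=
  initial_coefficient_ideals_stable_general K m n hn f b t u

end Paper
end
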